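/- arXiv:1301.4008 — 2 statements merged into one kernel-verified Lean document; each statement's English description precedes it below -/
import Mathlib

section
/- Let r and n be integers with 1 ≤ r ≤ n and r dividing n, and let k ≥ 2. If F_1, F_2, ..., F_k are graphs on a common vertex set of size n, each of which is the vertex-disjoint union of n/r copies of the complete graph K_r, then the simultaneous domination number of F_1, ..., F_k is at most (1 − ((r−1)/r)^{k−1}) · n. -/
/-- The simultaneous domination number of factors `F 0, …, F (k-1)` on a common
finite vertex set: the minimum cardinality of a set `S` that is a dominating set
in every factor. -/
noncomputable def simDomNum {V : Type*} [Fintype V] {k : ℕ}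
    (F : Fin k → SimpleGraph V) : ℕ :=
  sInf {m | ∃ S : Finset V, (∀ i, ∀ v ∉ S, ∃ u ∈ S, (F i).Adj v u) ∧ S.card = m}

/-- `G` is the vertex-disjoint union of copies of `K_r`: the vertex set is
partitioned into blocks of size `r`, and two vertices are adjacent iff they are
distinct and lie in a common block. -/
def IsUnionCliques {V : Type*} [Fintype V] [DecidableEq V]
    (G : SimpleGraph V) (r : ℕ) : Prop :=
  ∃ P : Finpartition (Finset.univ : Finset V),
    (∀ b ∈ P.parts, b.card = r) ∧
    ∀ u v : V, G.Adj u v ↔ (u ≠ v ∧ ∃ b ∈ P.parts, u ∈ b ∧ v ∈ b)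

/-!
Two partitions of `V` into blocks of size `r` have a common transversal (Hall's theorem),
which meets every block of both with only `n / r` vertices. Each further partition is handled
greedily: adding one vertex to every block that the current set `S` misses costs at most
`#Sᶜ / r` vertices, because those blocks are disjoint and lie in `Sᶜ`. So each of the remaining
`k - 2` partitions shrinks the complement by a factor of at most `(r - 1) / r`, and a set meeting
every block of every partition dominates every union of cliques.
-/

open Finset

lemma pow_succ_mul_le_pow_succ_mul {s r a b c m : ℕ} (h₁ : s * a ≤ r * b)
    (h₂ : s ^ m * b ≤ r ^ m * c) : s ^ (m + 1) * a ≤ r ^ (m + 1) * c :=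
  calc s ^ (m + 1) * a = s ^ m * (s * a) := by ring
    _ ≤ s ^ m * (r * b) := Nat.mul_le_mul_left _ h₁
    _ = r * (s ^ m * b) := by ring
    _ ≤ r * (r ^ m * c) := Nat.mul_le_mul_left _ h₂
    _ = r ^ (m + 1) * c := by ring

lemma Finpartition.card_mul_le_card_biUnion {α ι : Type*} [DecidableEq α] {s : Finset α}
    (P : Finpartition s) {r : ℕ} (I : Finset ι) {f : ι → Finset α}
    (hf : ∀ i ∈ I, f i ∈ P.parts) (hinj : Set.InjOn f I) (hr : ∀ i ∈ I, r ≤ #(f i)) :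
    #I * r ≤ #(I.biUnion f) := by
  rw [card_biUnion (t := f) fun i hi j hj hij =>
    P.disjoint (hf i hi) (hf j hj) (hinj.ne hi hj hij)]
  exact card_nsmul_le_sum I _ r hr

lemma Finpartition.card_parts_mul_eq {α : Type*} [DecidableEq α] {s : Finset α}
    (P : Finpartition s) {r : ℕ} (hP : ∀ b ∈ P.parts, #b = r) : #P.parts * r = #s :=
  (sum_const_nat hP).symm.trans P.sum_card_parts

section

variable {V : Type*} [Fintype V]

lemma simDomNum_le_card {k : ℕ} {F : Fin k → SimpleGraph V} {S : Finset V}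
    (hS : ∀ i, ∀ v ∉ S, ∃ u ∈ S, (F i).Adj v u) : simDomNum F ≤ #S :=
  Nat.sInf_le ⟨S, hS, rfl⟩

variable [DecidableEq V]

def MeetsParts (S : Finset V) (P : Finpartition (univ : Finset V)) : Prop :=
  ∀ b ∈ P.parts, (b ∩ S).Nonempty

lemma MeetsParts.mono {S S' : Finset V} {P : Finpartition (univ : Finset V)}
    (h : MeetsParts S P) (hSS' : S ⊆ S') : MeetsParts S' P :=
  fun b hb => (h b hb).mono (inter_subset_inter_left hSS')

lemma exists_injective_parts_inter_nonempty {r : ℕ} (hr : 0 < r)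
    (P Q : Finpartition (univ : Finset V))
    (hP : ∀ b ∈ P.parts, #b = r) (hQ : ∀ b ∈ Q.parts, #b = r) :
    ∃ f : P.parts → Q.parts, Function.Injective f ∧ ∀ p, (p.1 ∩ (f p).1).Nonempty := by
  let t : P.parts → Finset (Finset V) := fun p => Q.parts.filter fun q => (p.1 ∩ q).Nonempty
  have hall : ∀ s : Finset P.parts, #s ≤ #(s.biUnion t) := by
    intro s
    have hcover : s.biUnion Subtype.val ⊆ (s.biUnion t).biUnion id := by
      intro v hv
      obtain ⟨p, hp, hvp⟩ := mem_biUnion.mp hv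
      obtain ⟨q, hq, hvq⟩ := Q.exists_mem (mem_univ v)
      exact mem_biUnion.mpr ⟨q, mem_biUnion.mpr ⟨p, hp, mem_filter.mpr ⟨hq, v, mem_inter.mpr
        ⟨hvp, hvq⟩⟩⟩, hvq⟩
    refine Nat.le_of_mul_le_mul_right ?_ hr
    calc #s * r ≤ #(s.biUnion Subtype.val) :=
          P.card_mul_le_card_biUnion s (fun p _ => p.2) Subtype.val_injective.injOn
            fun p _ => (hP p.1 p.2).ge
      _ ≤ #((s.biUnion t).biUnion id) := card_le_card hcover
      _ ≤ #(s.biUnion t) * r := card_biUnion_le_card_mul _ _ _ fun q hq => by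
          obtain ⟨p, -, hq⟩ := mem_biUnion.mp hq
          exact (hQ q (mem_filter.mp hq).1).le
  obtain ⟨f, hf_inj, hf⟩ := (all_card_le_biUnion_card_iff_exists_injective t).mp hall
  exact ⟨fun p => ⟨f p, (mem_filter.mp (hf p)).1⟩,
    fun p p' h => hf_inj (congrArg Subtype.val h), fun p => (mem_filter.mp (hf p)).2⟩

lemma exists_common_transversal {r : ℕ} (hr : 0 < r) (P Q : Finpartition (univ : Finset V))
    (hP : ∀ b ∈ P.parts, #b = r) (hQ : ∀ b ∈ Q.parts, #b = r) :
    ∃ T : Finset V, #T * r ≤ Fintype.card V ∧ MeetsParts T P ∧ MeetsParts T Q := by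
  obtain ⟨f, hf_inj, hf⟩ := exists_injective_parts_inter_nonempty hr P Q hP hQ
  have hf_surj : Function.Surjective f := by
    refine ((Fintype.bijective_iff_injective_and_card f).mpr ⟨hf_inj, ?_⟩).2
    simp only [Fintype.card_coe]
    exact Nat.eq_of_mul_eq_mul_right hr (by rw [P.card_parts_mul_eq hP, Q.card_parts_mul_eq hQ])
  choose g hg using hf
  refine ⟨univ.image g, ?_, fun b hb => ?_, fun q hq => ?_⟩
  · calc #(univ.image g) * r ≤ #P.parts * r :=
          Nat.mul_le_mul_right r (card_image_le.trans (by simp))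
      _ = Fintype.card V := P.card_parts_mul_eq hP
  · exact ⟨g ⟨b, hb⟩, mem_inter.mpr ⟨(mem_inter.mp (hg ⟨b, hb⟩)).1,
      mem_image_of_mem g (mem_univ _)⟩⟩
  · obtain ⟨p, hpq⟩ := hf_surj ⟨q, hq⟩
    have hgq : g p ∈ q := by simpa [hpq] using (mem_inter.mp (hg p)).2
    exact ⟨g p, mem_inter.mpr ⟨hgq, mem_image_of_mem g (mem_univ _)⟩⟩

lemma exists_superset_meetsParts {r : ℕ} (P : Finpartition (univ : Finset V))
    (hP : ∀ b ∈ P.parts, r ≤ #b) (S : Finset V) :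
    ∃ S' : Finset V, S ⊆ S' ∧ MeetsParts S' P ∧ (r - 1) * #Sᶜ ≤ r * #S'ᶜ := by
  let missed := P.parts.filter fun b => Disjoint b S
  choose g hg using fun b (hb : b ∈ missed) => P.nonempty_of_mem_parts (mem_filter.mp hb).1
  let X := missed.attach.image fun b => g b.1 b.2
  refine ⟨S ∪ X, subset_union_left, fun b hb => ?_, ?_⟩
  · by_cases hbS : Disjoint b S
    · have hb' : b ∈ missed := mem_filter.mpr ⟨hb, hbS⟩
      exact ⟨g b hb', mem_inter.mpr ⟨hg b hb',
        mem_union_right S (mem_image_of_mem _ (mem_attach _ ⟨b, hb'⟩))⟩⟩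
    · exact (not_disjoint_iff_nonempty_inter.mp hbS).mono (inter_subset_inter_left
        subset_union_left)
  · have hmissed : #missed * r ≤ #Sᶜ := by
      calc #missed * r ≤ #(missed.biUnion id) :=
            P.card_mul_le_card_biUnion missed (fun b hb => (mem_filter.mp hb).1)
              (Set.injOn_id _) fun b hb => hP b (mem_filter.mp hb).1
        _ ≤ #Sᶜ := card_le_card fun v hv => by
            obtain ⟨b, hb, hvb⟩ := mem_biUnion.mp hv
            exact mem_compl.mpr (disjoint_left.mp (mem_filter.mp hb).2 hvb)
    have hX : #X ≤ #missed := card_image_le.trans card_attach.le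
    have hcompl : #Sᶜ ≤ #(S ∪ X)ᶜ + #X := by
      refine (card_le_card fun v hv => ?_).trans (card_union_le _ _)
      by_cases hvX : v ∈ X
      · exact mem_union_right _ hvX
      · exact mem_union_left _ (by simp_all)
    calc (r - 1) * #Sᶜ = r * #Sᶜ - #Sᶜ := Nat.sub_one_mul r _
      _ ≤ r * (#(S ∪ X)ᶜ + #X) - #X * r := tsub_le_tsub (Nat.mul_le_mul_left r hcompl)
          ((Nat.mul_le_mul_right r hX).trans hmissed)
      _ = r * #(S ∪ X)ᶜ := by rw [mul_add, mul_comm #X, Nat.add_sub_cancel]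

lemma exists_superset_meetsParts_family {ι : Type*} [DecidableEq ι] {r : ℕ}
    (P : ι → Finpartition (univ : Finset V)) (hP : ∀ i, ∀ b ∈ (P i).parts, r ≤ #b)
    (I : Finset ι) (S : Finset V) :
    ∃ S' : Finset V, S ⊆ S' ∧ (∀ i ∈ I, MeetsParts S' (P i)) ∧
      (r - 1) ^ #I * #Sᶜ ≤ r ^ #I * #S'ᶜ := by
  induction I using Finset.induction_on generalizing S with
  | empty => exact ⟨S, subset_rfl, by simp, by simp⟩
  | insert i I hi ih =>
    obtain ⟨S₁, hSS₁, hS₁, hc₁⟩ := exists_superset_meetsParts (P i) (hP i) S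
    obtain ⟨S', hS₁S', hS', hc'⟩ := ih S₁
    refine ⟨S', hSS₁.trans hS₁S', ?_, ?_⟩
    · simpa only [mem_insert, forall_eq_or_imp] using ⟨hS₁.mono hS₁S', hS'⟩
    · rw [card_insert_of_notMem hi]
      exact pow_succ_mul_le_pow_succ_mul hc₁ hc'

lemma exists_meetsParts_all {ι : Type*} [Fintype ι] [DecidableEq ι] {r : ℕ} (hr : 0 < r)
    (P : ι → Finpartition (univ : Finset V)) (hP : ∀ i, ∀ b ∈ (P i).parts, #b = r)
    {i j : ι} (hij : i ≠ j) :
    ∃ S : Finset V, (∀ l, MeetsParts S (P l)) ∧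
      (r - 1) ^ (Fintype.card ι - 1) * Fintype.card V ≤ r ^ (Fintype.card ι - 1) * #Sᶜ := by
  obtain ⟨T, hT, hTi, hTj⟩ := exists_common_transversal hr (P i) (P j) (hP i) (hP j)
  obtain ⟨S, hTS, hS, hc⟩ := exists_superset_meetsParts_family P
    (fun l b hb => (hP l b hb).ge) {i, j}ᶜ T
  have hcardI : #({i, j}ᶜ : Finset ι) + 1 = Fintype.card ι - 1 := by
    have := card_le_univ ({i, j} : Finset ι)
    rw [card_compl, card_pair hij] at *
    omega
  have hTc : (r - 1) * Fintype.card V ≤ r * #Tᶜ := by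
    rw [Nat.sub_one_mul, card_compl, Nat.mul_sub, mul_comm r #T]
    omega
  refine ⟨S, fun l => ?_, ?_⟩
  · by_cases hl : l ∈ ({i, j} : Finset ι)
    · rcases mem_insert.mp hl with rfl | hl
      · exact hTi.mono hTS
      · exact (mem_singleton.mp hl) ▸ hTj.mono hTS
    · exact hS l (mem_compl.mpr hl)
  · rw [← hcardI]
    exact pow_succ_mul_le_pow_succ_mul hTc hc

lemma dominates_of_meetsParts {G : SimpleGraph V} {P : Finpartition (univ : Finset V)}
    (hG : ∀ u v, G.Adj u v ↔ (u ≠ v ∧ ∃ b ∈ P.parts, u ∈ b ∧ v ∈ b)) {S : Finset V}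
    (hS : MeetsParts S P) : ∀ v ∉ S, ∃ u ∈ S, G.Adj v u := by
  intro v hv
  obtain ⟨b, hb, hvb⟩ := P.exists_mem (mem_univ v)
  obtain ⟨u, hu⟩ := hS b hb
  obtain ⟨hub, huS⟩ := mem_inter.mp hu
  exact ⟨u, huS, (hG v u).mpr ⟨fun h => hv (h ▸ huS), b, hb, hvb, hub⟩⟩

lemma cast_le_one_sub_div_pow_mul {s c N r m : ℕ} (hr : 1 ≤ r) (hsum : s + c = N)
    (h : (r - 1) ^ m * N ≤ r ^ m * c) : (s : ℝ) ≤ (1 - (((r : ℝ) - 1) / r) ^ m) * N := by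
  have hr' : (0 : ℝ) < r := by exact_mod_cast hr
  have hreal : ((r : ℝ) - 1) ^ m * N ≤ r ^ m * c := by exact_mod_cast h
  have hc : (((r : ℝ) - 1) / r) ^ m * N ≤ c := by
    rw [div_pow, div_mul_eq_mul_div, div_le_iff₀ (by positivity), mul_comm (c : ℝ)]
    exact hreal
  have hs : (s : ℝ) = N - c := by rw [← hsum]; push_cast; ring
  linarith

end

theorem stmt10_general {V : Type*} [Fintype V] [DecidableEq V] {r n k : ℕ}
    (hr : 1 ≤ r) (hn : Fintype.card V = n)
    (hk : 2 ≤ k) (F : Fin k → SimpleGraph V)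
    (hF : ∀ i, IsUnionCliques (F i) r) :
    (simDomNum F : ℝ) ≤ (1 - (((r : ℝ) - 1) / r) ^ (k - 1)) * n := by
  choose P hP hPadj using hF
  obtain ⟨S, hS, hSc⟩ := exists_meetsParts_all hr P hP
    (i := ⟨0, by omega⟩) (j := ⟨1, by omega⟩) (by simp)
  rw [Fintype.card_fin, hn] at hSc
  calc (simDomNum F : ℝ) ≤ S.card := by
        exact_mod_cast simDomNum_le_card fun i => dominates_of_meetsParts (hPadj i) (hS i)
    _ ≤ (1 - (((r : ℝ) - 1) / r) ^ (k - 1)) * n :=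
        cast_le_one_sub_div_pow_mul hr (hn ▸ S.card_add_card_compl) hSc

theorem stmt10 {V : Type*} [Fintype V] [DecidableEq V] {r n k : ℕ}
    (hr : 1 ≤ r) (hrn : r ≤ n) (hdvd : r ∣ n) (hn : Fintype.card V = n)
    (hk : 2 ≤ k) (F : Fin k → SimpleGraph V)
    (hF : ∀ i, IsUnionCliques (F i) r) :
    (simDomNum F : ℝ) ≤ (1 - (((r : ℝ) - 1) / r) ^ (k - 1)) * n :=
  stmt10_general hr hn hk F hF
end

section
/- Let r and n be integers with 1 ≤ r ≤ n and r dividing n, and let k ≥ 2. If F_1, F_2, ..., F_k are graphs on a common vertex set of size n, each of which is the vertex-disjoint union of n/r copies of the complete graph K_r, then the simultaneous domination number of F_1, ..., F_k is at most (k/(2r)) · n when k is even, and at most ((r(k+1) − 2)/(2r^2)) · n when k is odd. -/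
open Finset


lemma parts_card_mul {V : Type*} [Fintype V] [DecidableEq V] {r : ℕ}
    (P : Finpartition (Finset.univ : Finset V)) (h : ∀ b ∈ P.parts, b.card = r) :
    P.parts.card * r = Fintype.card V := by
  have := P.sum_card_parts
  rw [Finset.sum_congr rfl h, Finset.sum_const, smul_eq_mul, Finset.card_univ] at this
  exact this

lemma transversal {V : Type*} [Fintype V] [DecidableEq V] {r : ℕ} (hr : 1 ≤ r)
    (P Q : Finpartition (Finset.univ : Finset V))
    (hP : ∀ b ∈ P.parts, b.card = r) (hQ : ∀ b ∈ Q.parts, b.card = r) :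
    ∃ T : Finset V, T.card * r ≤ Fintype.card V ∧
      (∀ b ∈ P.parts, ∃ u ∈ T, u ∈ b) ∧ (∀ b ∈ Q.parts, ∃ u ∈ T, u ∈ b) := by
  classical
  set ι := {b : Finset V // b ∈ Q.parts}
  set t : ι → Finset (Finset V) :=
    fun b => P.parts.filter (fun p => ∃ x ∈ p, x ∈ (b : Finset V)) with ht
  have hall : ∀ s : Finset ι, s.card ≤ (s.biUnion t).card := by
    intro s
    have h1 : (s.biUnion (fun b => (b : Finset V))).card = s.card * r := by
      rw [Finset.card_biUnion (fun x _ y _ hxy => by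
        exact Q.disjoint x.2 y.2 (fun h => hxy (Subtype.ext h)))]
      rw [Finset.sum_congr rfl (fun b _ => hQ b.1 b.2), Finset.sum_const, smul_eq_mul]
    have h2 : s.biUnion (fun b => (b : Finset V)) ⊆ (s.biUnion t).biUnion id := by
      intro v hv
      simp only [Finset.mem_biUnion] at hv ⊢
      obtain ⟨b, hb, hvb⟩ := hv
      obtain ⟨p, hp, hvp⟩ := P.exists_mem (Finset.mem_univ v)
      exact ⟨p, ⟨b, hb, Finset.mem_filter.mpr ⟨hp, v, hvp, hvb⟩⟩, hvp⟩
    have h3 : ((s.biUnion t).biUnion id).card ≤ (s.biUnion t).card * r := by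
      refine le_trans Finset.card_biUnion_le ?_
      have hb : ∀ a ∈ s.biUnion t, (id a : Finset V).card ≤ r := by
        intro a ha
        obtain ⟨b, _, hab⟩ := Finset.mem_biUnion.mp ha
        exact le_of_eq (hP a (Finset.mem_filter.mp hab).1)
      simpa using Finset.sum_le_card_nsmul _ _ r hb
    have := le_trans (le_of_eq h1.symm) (le_trans (Finset.card_le_card h2) h3)
    exact Nat.le_of_mul_le_mul_right this (by omega)
  obtain ⟨f, hfinj, hft⟩ := (Finset.all_card_le_biUnion_card_iff_exists_injective t).mp hall
  have hfP : ∀ b : ι, f b ∈ P.parts := fun b => (Finset.mem_filter.mp (hft b)).1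
  have hex : ∀ b : ι, ∃ x, x ∈ f b ∧ x ∈ (b : Finset V) := by
    intro b
    obtain ⟨x, hx1, hx2⟩ := (Finset.mem_filter.mp (hft b)).2
    exact ⟨x, hx1, hx2⟩
  choose x hx1 hx2 using hex
  refine ⟨Finset.image x Finset.univ, ?_, ?_, ?_⟩
  · calc (Finset.image x Finset.univ).card * r ≤ Q.parts.card * r := by
          have := Finset.card_image_le (f := x) (s := (Finset.univ : Finset ι))
          rw [Finset.card_univ, Fintype.card_coe] at this
          exact Nat.mul_le_mul_right r this
       _ = Fintype.card V := parts_card_mul Q hQ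
  · intro p hp
    have himg : Finset.image f Finset.univ = P.parts := by
      apply Finset.eq_of_subset_of_card_le
      · intro q hq
        obtain ⟨b, _, rfl⟩ := Finset.mem_image.mp hq
        exact hfP b
      · rw [Finset.card_image_of_injective _ hfinj, Finset.card_univ, Fintype.card_coe]
        have h1 := parts_card_mul P hP
        have h2 := parts_card_mul Q hQ
        have : P.parts.card * r = Q.parts.card * r := h1.trans h2.symm
        exact (Nat.eq_of_mul_eq_mul_right (by omega) this).le
    obtain ⟨b, _, hb⟩ := Finset.mem_image.mp (himg ▸ hp)
    exact ⟨x b, Finset.mem_image_of_mem x (Finset.mem_univ b), hb ▸ hx1 b⟩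
  · intro b hb
    exact ⟨x ⟨b, hb⟩, Finset.mem_image_of_mem x (Finset.mem_univ _), hx2 ⟨b, hb⟩⟩

lemma hit_card_le {V : Type*} [Fintype V] [DecidableEq V] {r : ℕ} (hr : 1 ≤ r)
    (Pk : Finpartition (Finset.univ : Finset V)) (hPk : ∀ b ∈ Pk.parts, b.card = r)
    (S : Finset V) :
    S.card ≤ (Pk.parts.filter (fun b => ∃ x ∈ b, x ∈ S)).card * r := by
  classical
  set H := Pk.parts.filter (fun b => ∃ x ∈ b, x ∈ S) with hH
  have hsub : S ⊆ H.biUnion id := by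
    intro v hv
    obtain ⟨b, hb, hvb⟩ := Pk.exists_mem (Finset.mem_univ v)
    exact Finset.mem_biUnion.mpr ⟨b, Finset.mem_filter.mpr ⟨hb, v, hvb, hv⟩, hvb⟩
  have h2 : (H.biUnion id).card ≤ H.card * r := by
    refine le_trans Finset.card_biUnion_le ?_
    have hb : ∀ a ∈ H, (id a : Finset V).card ≤ r := fun a ha =>
      le_of_eq (hPk a (Finset.mem_filter.mp ha).1)
    simpa using Finset.sum_le_card_nsmul _ _ r hb
  exact le_trans (Finset.card_le_card hsub) h2


theorem stmt12 {V : Type*} [Fintype V] [DecidableEq V] {r n k : ℕ}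
    (hr : 1 ≤ r) (hrn : r ≤ n) (hdvd : r ∣ n) (hn : Fintype.card V = n)
    (hk : 2 ≤ k) (F : Fin k → SimpleGraph V)
    (hF : ∀ i, IsUnionCliques (F i) r) :
    (Even k → (simDomNum F : ℝ) ≤ ((k : ℝ) / (2 * r)) * n) ∧
      (Odd k → (simDomNum F : ℝ) ≤
        (((r : ℝ) * ((k : ℝ) + 1) - 2) / (2 * (r : ℝ) ^ 2)) * n) := by
  classical
  choose P hPr hPadj using hF
  obtain ⟨m, hm⟩ := hdvd
  have hm1 : 1 ≤ m := by
    rcases Nat.eq_zero_or_pos m with h | h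
    · rw [h, mul_zero] at hm; omega
    · exact h
  -- domination from hitting every block of every partition
  have domOf : ∀ S : Finset V, (∀ i : Fin k, ∀ b ∈ (P i).parts, ∃ u ∈ S, u ∈ b) →
      simDomNum F ≤ S.card := by
    intro S hS
    apply Nat.sInf_le
    refine ⟨S, ?_, rfl⟩
    intro i v hv
    obtain ⟨b, hb, hvb⟩ := (P i).exists_mem (Finset.mem_univ v)
    obtain ⟨u, huS, hub⟩ := hS i b hb
    exact ⟨u, huS, (hPadj i v u).mpr ⟨fun h => hv (h ▸ huS), b, hb, hvb, hub⟩⟩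
  -- transversals for a pair of factors
  have hTex : ∀ i j : Fin k, ∃ T : Finset V, T.card ≤ m ∧
      (∀ b ∈ (P i).parts, ∃ u ∈ T, u ∈ b) ∧ (∀ b ∈ (P j).parts, ∃ u ∈ T, u ∈ b) := by
    intro i j
    obtain ⟨T, hT1, hT2, hT3⟩ := transversal hr (P i) (P j) (hPr i) (hPr j)
    refine ⟨T, ?_, hT2, hT3⟩
    rw [hn, hm, mul_comm r m] at hT1
    exact Nat.le_of_mul_le_mul_right hT1 (by omega)
  have hrR : (0:ℝ) < (r:ℝ) := by exact_mod_cast hr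
  have hnR : (n:ℝ) = (r:ℝ) * m := by exact_mod_cast hm
  constructor
  · -- even case
    rintro ⟨t, ht⟩
    have hi0 : ∀ j : Fin t, 2 * j.1 < k := fun j => by have := j.2; omega
    have hi1 : ∀ j : Fin t, 2 * j.1 + 1 < k := fun j => by have := j.2; omega
    have hTex' := fun j : Fin t => hTex ⟨2 * j.1, hi0 j⟩ ⟨2 * j.1 + 1, hi1 j⟩
    choose T hT1 hT2 hT3 using hTex'
    set S := Finset.univ.biUnion T with hSdef
    have hScard : S.card ≤ t * m := by
      refine le_trans Finset.card_biUnion_le ?_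
      calc ∑ j : Fin t, (T j).card ≤ ∑ _j : Fin t, m := Finset.sum_le_sum (fun j _ => hT1 j)
        _ = t * m := by simp [mul_comm]
    have hhit : ∀ i : Fin k, ∀ b ∈ (P i).parts, ∃ u ∈ S, u ∈ b := by
      intro i b hb
      rcases Nat.even_or_odd i.1 with ⟨c, hc⟩ | ⟨c, hc⟩
      · have hct : c < t := by omega
        have hieq : i = ⟨2 * c, hi0 ⟨c, hct⟩⟩ := Fin.ext (by simp; omega)
        obtain ⟨u, hu1, hu2⟩ := hT2 ⟨c, hct⟩ b (by rwa [hieq] at hb)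
        exact ⟨u, Finset.mem_biUnion.mpr ⟨⟨c, hct⟩, Finset.mem_univ _, hu1⟩, hu2⟩
      · have hct : c < t := by omega
        have hieq : i = ⟨2 * c + 1, hi1 ⟨c, hct⟩⟩ := Fin.ext (by simp; omega)
        obtain ⟨u, hu1, hu2⟩ := hT3 ⟨c, hct⟩ b (by rwa [hieq] at hb)
        exact ⟨u, Finset.mem_biUnion.mpr ⟨⟨c, hct⟩, Finset.mem_univ _, hu1⟩, hu2⟩
    have hdom := le_trans (domOf S hhit) hScard
    have : (simDomNum F : ℝ) ≤ (t:ℝ) * m := by exact_mod_cast hdom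
    refine le_trans this ?_
    have hkR : (k:ℝ) = 2 * t := by exact_mod_cast (by omega : k = 2 * t)
    rw [hkR, hnR]
    rw [div_mul_eq_mul_div, le_div_iff₀ (by positivity)]
    ring_nf
    nlinarith [hrR, sq_nonneg ((t:ℝ) * m)]
  · -- odd case
    rintro ⟨t, ht⟩
    have ht1 : 1 ≤ t := by omega
    have hi0 : ∀ j : Fin t, 2 * j.1 < k := fun j => by have := j.2; omega
    have hi1 : ∀ j : Fin t, 2 * j.1 + 1 < k := fun j => by have := j.2; omega
    have hTex' := fun j : Fin t => hTex ⟨2 * j.1, hi0 j⟩ ⟨2 * j.1 + 1, hi1 j⟩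
    choose T hT1 hT2 hT3 using hTex'
    set S0 := Finset.univ.biUnion T with hS0def
    have hS0card : S0.card ≤ t * m := by
      refine le_trans Finset.card_biUnion_le ?_
      calc ∑ j : Fin t, (T j).card ≤ ∑ _j : Fin t, m := Finset.sum_le_sum (fun j _ => hT1 j)
        _ = t * m := by simp [mul_comm]
    set ik : Fin k := ⟨2 * t, by omega⟩ with hikdef
    set Pk := P ik with hPkdef
    set H := Pk.parts.filter (fun b => ∃ x ∈ b, x ∈ S0) with hHdef
    set U := Pk.parts.filter (fun b => ¬ ∃ x ∈ b, x ∈ S0) with hUdef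
    have hHU : H.card + U.card = m := by
      have h1 := Finset.card_filter_add_card_filter_not
        (s := Pk.parts) (p := fun b => ∃ x ∈ b, x ∈ S0)
      have h2 : Pk.parts.card * r = n := by rw [← hn]; exact parts_card_mul Pk (hPr ik)
      have h3 : Pk.parts.card = m := by
        rw [hm, mul_comm r m] at h2
        exact Nat.eq_of_mul_eq_mul_right (by omega) h2
      rw [← h3]; exact h1
    have hSH : S0.card ≤ H.card * r := hit_card_le hr Pk (hPr ik) S0
    have hV : Nonempty V := by
      rw [← Fintype.card_pos_iff]; omega
    set y : Finset V → V := fun b => if h : b.Nonempty then h.choose else Classical.arbitrary V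
      with hydef
    have hy : ∀ b ∈ U, y b ∈ b := by
      intro b hb
      have hbP : b ∈ Pk.parts := (Finset.mem_filter.mp hb).1
      have hne : b.Nonempty := Finset.card_pos.mp (by rw [hPr ik b hbP]; omega)
      simp only [hydef, dif_pos hne]
      exact hne.choose_spec
    set S := S0 ∪ U.image y with hSdef
    have hScard : S.card ≤ S0.card + U.card :=
      le_trans (Finset.card_union_le _ _) (by gcongr; exact Finset.card_image_le)
    have hhit : ∀ i : Fin k, ∀ b ∈ (P i).parts, ∃ u ∈ S, u ∈ b := by
      intro i b hb
      rcases Nat.lt_or_ge i.1 (2 * t) with hlt | hge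
      · rcases Nat.even_or_odd i.1 with ⟨c, hc⟩ | ⟨c, hc⟩
        · have hct : c < t := by omega
          have hieq : i = ⟨2 * c, hi0 ⟨c, hct⟩⟩ := Fin.ext (by simp; omega)
          obtain ⟨u, hu1, hu2⟩ := hT2 ⟨c, hct⟩ b (by rwa [hieq] at hb)
          exact ⟨u, Finset.mem_union_left _
            (Finset.mem_biUnion.mpr ⟨⟨c, hct⟩, Finset.mem_univ _, hu1⟩), hu2⟩
        · have hct : c < t := by omega
          have hieq : i = ⟨2 * c + 1, hi1 ⟨c, hct⟩⟩ := Fin.ext (by simp; omega)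
          obtain ⟨u, hu1, hu2⟩ := hT3 ⟨c, hct⟩ b (by rwa [hieq] at hb)
          exact ⟨u, Finset.mem_union_left _
            (Finset.mem_biUnion.mpr ⟨⟨c, hct⟩, Finset.mem_univ _, hu1⟩), hu2⟩
      · have hieq : i = ik := Fin.ext (by simp [hikdef]; omega)
        rw [hieq] at hb
        by_cases hx : ∃ x ∈ b, x ∈ S0
        · obtain ⟨x, hxb, hxS⟩ := hx
          exact ⟨x, Finset.mem_union_left _ hxS, hxb⟩
        · have hbU : b ∈ U := Finset.mem_filter.mpr ⟨hb, hx⟩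
          exact ⟨y b, Finset.mem_union_right _ (Finset.mem_image_of_mem y hbU), hy b hbU⟩
    have hdom := le_trans (domOf S hhit) hScard
    have hcast : (simDomNum F : ℝ) ≤ (S0.card : ℝ) + U.card := by exact_mod_cast hdom
    refine le_trans hcast ?_
    have hkR : (k:ℝ) = 2 * t + 1 := by exact_mod_cast ht
    have ha : (S0.card : ℝ) ≤ (t:ℝ) * m := by exact_mod_cast hS0card
    have hb : (H.card : ℝ) + U.card = m := by exact_mod_cast hHU
    have hc : (S0.card : ℝ) ≤ (H.card : ℝ) * r := by exact_mod_cast hSH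
    have htR : (1:ℝ) ≤ t := by exact_mod_cast ht1
    have hmR : (1:ℝ) ≤ m := by exact_mod_cast hm1
    have hrR1 : (1:ℝ) ≤ r := by exact_mod_cast hr
    rw [hkR, hnR]
    rw [div_mul_eq_mul_div, le_div_iff₀ (by positivity)]
    nlinarith [mul_le_mul_of_nonneg_right ha (by nlinarith : (0:ℝ) ≤ 2*(r:ℝ)^2 - 2*r),
      mul_le_mul_of_nonneg_right hc (by positivity : (0:ℝ) ≤ 2*(r:ℝ)),
      mul_le_mul_of_nonneg_right (mul_le_mul_of_nonneg_right htR (by positivity : (0:ℝ) ≤ (m:ℝ))) (by positivity : (0:ℝ) ≤ 2*(r:ℝ)),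
      hb]
end
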